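/- Let T be a semistandard Young tableau over {1,...,n} and let k, m ∈ {1,...,n} with k ≤ m. Then the maximum length of a weakly increasing-through-the-chain scattered subword of the column reading of T that can be read from the set {1,...,k} to the set {m−k+1,...,m} equals the total number of entries from {1,...,m} lying in the bottom k rows of T. -/

import Mathlib

/-- The `i`-th smallest element (0-indexed) of a finite set of naturals
(`0` if `i` is out of range). -/
def nthEl (S : Finset ℕ) (i : ℕ) : ℕ := (S.sort (· ≤ ·)).getD i 0

/-- The order on subsets of equal cardinality: `S ≤ T` iff `|S| = |T|` and the `i`-th
smallest element of `S` is at most that of `T`, for all `i`. -/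
def FLE (S T : Finset ℕ) : Prop :=
  S.card = T.card ∧ ∀ i < T.card, nthEl S i ≤ nthEl T i

/-- The general order: `S ≤ T` iff `|S| ≥ |T|` and the `i`-th smallest element of `S`
is at most that of `T` for all `i < |T|`. -/
def GLE (S T : Finset ℕ) : Prop :=
  T.card ≤ S.card ∧ ∀ i < T.card, nthEl S i ≤ nthEl T i

/-- A word `w` over `{1,…,n}` is readable from `P` to `Q` if there is a chain
`P ≤ S₁ ≤ … ≤ S_{|w|} ≤ Q` of subsets of `{1,…,n}` with `wᵢ ∈ Sᵢ` for each `i`. -/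
def Readable (n : ℕ) (w : List ℕ) (P Q : Finset ℕ) : Prop :=
  ∃ L : List (Finset ℕ), L.length = w.length ∧ (∀ A ∈ L, A ⊆ Finset.Icc 1 n) ∧
    List.Chain' FLE (P :: (L ++ [Q])) ∧
    ∀ i (h : i < w.length), w.get ⟨i, h⟩ ∈ L.getD i ∅

/-- Tropical (max-plus) product of matrices indexed by subsets of `{1,…,n}`. -/
noncomputable def tmul (n : ℕ) (A B : Finset ℕ → Finset ℕ → WithBot ℝ) :
    Finset ℕ → Finset ℕ → WithBot ℝ :=
  fun P Q => ((Finset.Icc 1 n).powerset).sup fun R => A P R + B R Q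

open Classical in
/-- The image of a generator `x ∈ {1,…,n}` under `ρₙ`. -/
noncomputable def rhoGen (n : ℕ) (x : ℕ) (P Q : Finset ℕ) : WithBot ℝ :=
  if FLE P Q then
    (if ∃ S : Finset ℕ, S ⊆ Finset.Icc 1 n ∧ FLE P S ∧ FLE S Q ∧ x ∈ S then 1 else 0)
  else ⊥

open Classical in
/-- The image of a word under `ρₙ`, extended multiplicatively (the empty word maps to the
matrix with `0` in positions `(P,Q)` with `P ≤ Q` and `-∞` elsewhere). -/
noncomputable def rhoW (n : ℕ) : List ℕ → Finset ℕ → Finset ℕ → WithBot ℝ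
  | [] => fun P Q => if FLE P Q then 0 else ⊥
  | x :: w => tmul n (rhoGen n x) (rhoW n w)

/-- The Knuth relations over `{1,…,n}`. -/
inductive KnuthRel (n : ℕ) : List ℕ → List ℕ → Prop
  | k1 (a b c : ℕ) (h1 : 1 ≤ a) (h2 : a < b) (h3 : b ≤ c) (h4 : c ≤ n) :
      KnuthRel n [b, c, a] [b, a, c]
  | k2 (a b c : ℕ) (h1 : 1 ≤ a) (h2 : a ≤ b) (h3 : b < c) (h4 : c ≤ n) :
      KnuthRel n [c, a, b] [a, c, b]

/-- The plactic congruence on words: the equivalence generated by applying Knuth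
relations inside words. Two words are related iff they represent the same element of
the plactic monoid of rank `n`. -/
def PlacticRel (n : ℕ) : List ℕ → List ℕ → Prop :=
  Relation.EqvGen fun w v => ∃ p s x y, KnuthRel n x y ∧ w = p ++ x ++ s ∧ v = p ++ y ++ s

/-- A semistandard Young tableau over `{1,…,n}`, given by its list of rows
(row 0 is the bottom row): entries lie in `{1,…,n}`, rows weakly increase left to right,
row lengths weakly decrease going up, columns strictly increase going up
(i.e. strictly decrease reading down). -/
structure Tableau (n : ℕ) where
  rows : List (List ℕ)
  entries_mem : ∀ r ∈ rows, ∀ x ∈ r, x ∈ Finset.Icc 1 n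
  row_weak : ∀ r ∈ rows, List.Pairwise (· ≤ ·) r
  shape : ∀ i, (rows.getD (i + 1) []).length ≤ (rows.getD i []).length
  col_strict : ∀ i j, j < (rows.getD (i + 1) []).length →
    (rows.getD i []).getD j 0 < (rows.getD (i + 1) []).getD j 0

/-- The number of occurrences of the symbol `y` in row `x` (rows numbered from 1, from
the bottom) of the tableau `T`. -/
def rowCount {n : ℕ} (T : Tableau n) (x y : ℕ) : ℕ := (T.rows.getD (x - 1) []).count y

/-- The row reading of a tableau: rows read left to right, from top row to bottom row. -/
def rowReading {n : ℕ} (T : Tableau n) : List ℕ := T.rows.reverse.flatten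

/-- The `j`-th column of a tableau, read from top to bottom. -/
def colOf {n : ℕ} (T : Tableau n) (j : ℕ) : List ℕ :=
  ((List.range T.rows.length).reverse).filterMap fun i => (T.rows.getD i [])[j]?

/-- The column reading of a tableau: columns read top to bottom, left to right. -/
def colReading {n : ℕ} (T : Tableau n) : List ℕ :=
  ((List.range ((T.rows.getD 0 []).length)).map (colOf T)).flatten

/-- The `(k,m)`-completion of `S ⊆ {1,…,m}`: adjoin to `S` the `k - |S|` largest
elements of `{1,…,m} \ S`. -/
def completion (k m : ℕ) (S : Finset ℕ) : Finset ℕ :=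
  S ∪ ((((Finset.Icc 1 m) \ S).sort (· ≤ ·)).reverse.take (k - S.card)).toFinset

/-- Tropical (max-plus) product of `n × n` matrices over `ℝ ∪ {-∞}`. -/
noncomputable def tmulF (n : ℕ) (A B : Fin n → Fin n → WithBot ℝ) :
    Fin n → Fin n → WithBot ℝ :=
  fun i j => Finset.univ.sup fun k => A i k + B k j

/-- The tropical identity matrix. -/
noncomputable def tIdF (n : ℕ) : Fin n → Fin n → WithBot ℝ :=
  fun i j => if i = j then (0 : WithBot ℝ) else ⊥

/-!
For `k`-sets, `S ≤ T` says that, for every `c`, `T` has at most as many elements `≤ c` as `S`.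
Along such a chain `S₁ ≤ S₂ ≤ ⋯`, a strictly decreasing word `x₁ > x₂ > ⋯ > x_r` with `xᵢ ∈ Sᵢ`
has `r ≤ #{x ∈ S₁ | x ≤ x₁} ≤ k`, and a word readable to `{m-k+1,…,m}` only uses letters `≤ m`.
Columns of `T` are strictly decreasing, so the part of a readable subword of the column reading
lying in column `j` has length at most `min k dⱼ`, where `dⱼ` counts the entries `≤ m` of column
`j`; and `∑ⱼ min k dⱼ` is the number of entries `≤ m` in the bottom `k` rows. Conversely, the lowest
`min k dⱼ` entries `≤ m` of every column form a readable subword: column `j` is read through a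
single set, the completion of these entries to a `k`-subset of `{1,…,m}` by the largest missing
elements, and these completions increase from left to right because the rows of `T` increase.
-/

open scoped Finset

namespace List

theorem Pairwise.getElem_le_iff_lt_countP {α : Type*} [LinearOrder α] {l : List α}
    (hl : l.Pairwise (· ≤ ·)) {s : ℕ} (hs : s < l.length) (c : α) :
    l[s] ≤ c ↔ s < l.countP (· ≤ c) := by
  have hmono : ∀ i (hi : i < l.length), i ≤ s → l[i] ≤ l[s] := fun i hi his =>
    hl.rel_get_of_le (a := ⟨i, hi⟩) (b := ⟨s, hs⟩) his
  constructor
  · intro h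
    calc s < (l.take (s + 1)).countP (· ≤ c) := by
          rw [List.countP_eq_length.2 fun x hx => ?_]
          · simp only [List.length_take]; omega
          obtain ⟨i, hi, rfl⟩ := List.getElem_of_mem hx
          simp only [List.length_take, List.getElem_take, decide_eq_true_eq] at hi ⊢
          exact (hmono i (by omega) (by omega)).trans h
      _ ≤ _ := (List.take_sublist _ _).countP_le
  · intro h
    by_contra! hlt
    have hdrop : (l.drop s).countP (· ≤ c) = 0 := by
      refine List.countP_eq_zero.2 fun x hx => ?_
      obtain ⟨i, hi, rfl⟩ := List.getElem_of_mem hx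
      simp only [List.getElem_drop, decide_eq_true_eq, not_le]
      exact hlt.trans_le
        (hl.rel_get_of_le (a := ⟨s, hs⟩) (b := ⟨s + i, by simp at hi; omega⟩) (by simp))
    have htake := List.countP_le_length (p := (· ≤ c)) (l := l.take s)
    rw [← List.take_append_drop s l, List.countP_append, hdrop] at h
    simp only [List.length_take] at htake
    omega

theorem Pairwise.mem_take_of_lt {α : Type*} [Preorder α] {l : List α}
    (hl : l.Pairwise (· > ·)) {d : ℕ} {x y : α} (hy : y ∈ l.take d) (hx : x ∈ l) (hxy : y < x) :
    x ∈ l.take d := by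
  induction l generalizing d with
  | nil => cases hx
  | cons a l ih =>
    cases d with
    | zero => simp at hy
    | succ d =>
      rw [List.take_succ_cons] at hy ⊢
      rcases List.mem_cons.1 hx with rfl | hxl
      · exact List.mem_cons_self
      rcases List.mem_cons.1 hy with rfl | hyl
      · exact absurd (List.rel_of_pairwise_cons hl hxl) (lt_asymm hxy)
      · exact List.mem_cons_of_mem _ (ih hl.of_cons hyl hxl)

theorem Forall₂.exists_mem_of_mem_left {α β : Type*} {R : α → β → Prop} {l₁ : List α}
    {l₂ : List β} (h : List.Forall₂ R l₁ l₂) {a : α} (ha : a ∈ l₁) : ∃ b ∈ l₂, R a b := by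
  induction h with
  | nil => cases ha
  | cons hab _ ih =>
    rcases List.mem_cons.1 ha with rfl | ha
    · exact ⟨_, List.mem_cons_self, hab⟩
    · obtain ⟨b, hb, hab⟩ := ih ha
      exact ⟨b, List.mem_cons_of_mem _ hb, hab⟩

theorem forall₂_replicate_length {α β : Type*} {R : α → β → Prop} {l : List α} {b : β}
    (h : ∀ a ∈ l, R a b) : List.Forall₂ R l (List.replicate l.length b) := by
  induction l with
  | nil => exact .nil
  | cons a l ih =>
    exact .cons (h a List.mem_cons_self) (ih fun x hx => h x (List.mem_cons_of_mem _ hx))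

theorem flatten_map_sublist_flatten_map {ι α : Type*} {l : List ι} {f g : ι → List α}
    (h : ∀ i ∈ l, (f i).Sublist (g i)) : (l.map f).flatten.Sublist (l.map g).flatten := by
  induction l with
  | nil => exact .slnil
  | cons i l ih =>
    exact (h i List.mem_cons_self).append (ih fun j hj => h j (List.mem_cons_of_mem _ hj))

theorem sum_map_range {M : Type*} [AddCommMonoid M] (f : ℕ → M) (N : ℕ) :
    ((List.range N).map f).sum = ∑ i ∈ Finset.range N, f i := by
  simp [Finset.sum, Finset.range_val, Multiset.range]

theorem countP_range (q : ℕ → Prop) [DecidablePred q] (N : ℕ) :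
    (List.range N).countP (fun i => q i) = #{i ∈ Finset.range N | q i} := by
  simp [Finset.card, Finset.filter_val, Finset.range_val, Multiset.range,
    List.countP_eq_length_filter]

theorem map_getD_range {α : Type*} (l : List α) (d : α) :
    (List.range l.length).map (l.getD · d) = l := by
  refine List.ext_getElem (by simp) fun i _ h => ?_
  simp [List.getElem?_eq_getElem h]

theorem lt_countP_range_iff {q : ℕ → Prop} [DecidablePred q] {h : ℕ}
    (hq : ∀ i j, i ≤ j → j < h → q j → q i) {i : ℕ} :
    i < (List.range h).countP (fun i => q i) ↔ i < h ∧ q i := by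
  induction h generalizing i with
  | zero => simp
  | succ h ih =>
    rw [List.range_succ, List.countP_append]
    by_cases hh : q h
    · have hall : (List.range h).countP (fun i => q i) = h :=
        (List.countP_eq_length.2 fun a ha => by
          simpa using hq a h (List.mem_range.1 ha).le (by omega) hh).trans List.length_range
      simp only [hall, List.countP_singleton, hh, decide_true, if_true]
      exact ⟨fun hi => ⟨hi, hq i h (by omega) (by omega) hh⟩, fun hi => hi.1⟩
    · simp only [List.countP_singleton, hh, decide_false, Bool.false_eq_true, if_false,
        Nat.add_zero, ih fun a b hab hb => hq a b hab (by omega)]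
      refine ⟨fun hi => ⟨by omega, hi.2⟩, fun ⟨hi, hqi⟩ => ⟨?_, hqi⟩⟩
      exact lt_of_le_of_ne (by omega) fun e => hh (e ▸ hqi)

end List

section SubsetOrder

def numLE (S : Finset ℕ) (c : ℕ) : ℕ := #{x ∈ S | x ≤ c}

theorem numLE_le_card (S : Finset ℕ) (c : ℕ) : numLE S c ≤ S.card :=
  Finset.card_filter_le _ _

theorem numLE_mono {S T : Finset ℕ} (h : S ⊆ T) (c : ℕ) : numLE S c ≤ numLE T c :=
  Finset.card_le_card (Finset.filter_subset_filter _ h)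

theorem numLE_eq_countP_sort (S : Finset ℕ) (c : ℕ) :
    numLE S c = (S.sort (· ≤ ·)).countP (· ≤ c) := by
  rw [numLE, Finset.card_def, Finset.filter_val, ← Multiset.countP_eq_card_filter]
  conv_lhs => rw [← Finset.sort_eq S (· ≤ ·)]
  rw [Multiset.coe_countP]

theorem nthEl_le_iff_lt_numLE {S : Finset ℕ} {i : ℕ} (hi : i < S.card) (c : ℕ) :
    nthEl S i ≤ c ↔ i < numLE S c := by
  have hi' : i < (S.sort (· ≤ ·)).length := by rwa [Finset.length_sort]
  rw [nthEl, List.getD_eq_getElem _ _ hi', numLE_eq_countP_sort]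
  exact (Finset.pairwise_sort S _).getElem_le_iff_lt_countP hi' c

theorem fle_iff_numLE {S T : Finset ℕ} :
    FLE S T ↔ S.card = T.card ∧ ∀ c, numLE T c ≤ numLE S c := by
  refine ⟨fun ⟨hcard, hle⟩ => ⟨hcard, fun c => ?_⟩, fun ⟨hcard, hle⟩ => ⟨hcard, fun i hi => ?_⟩⟩
  · by_contra! hlt
    have hT : numLE S c < T.card := hlt.trans_le (numLE_le_card T c)
    have hTc : nthEl T (numLE S c) ≤ c := (nthEl_le_iff_lt_numLE hT c).2 hlt
    exact lt_irrefl _ ((nthEl_le_iff_lt_numLE (hcard ▸ hT) c).1 ((hle _ hT).trans hTc))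
  · exact (nthEl_le_iff_lt_numLE (hcard ▸ hi) _).2
      (((nthEl_le_iff_lt_numLE hi _).1 le_rfl).trans_le (hle _))

theorem FLE.refl (S : Finset ℕ) : FLE S S := ⟨rfl, fun _ _ => le_rfl⟩

theorem FLE.trans {S T U : Finset ℕ} (h₁ : FLE S T) (h₂ : FLE T U) : FLE S U := by
  rw [fle_iff_numLE] at *
  exact ⟨h₁.1.trans h₂.1, fun c => (h₂.2 c).trans (h₁.2 c)⟩

instance : Trans FLE FLE FLE := ⟨FLE.trans⟩

theorem card_sub_le_numLE {S : Finset ℕ} {m : ℕ} (hS : S ⊆ Finset.Icc 1 m) (c : ℕ) :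
    S.card - (m - c) ≤ numLE S c := by
  have hgt : #{x ∈ S | ¬x ≤ c} ≤ m - c :=
    calc #{x ∈ S | ¬x ≤ c} ≤ #(Finset.Icc (c + 1) m) := Finset.card_le_card fun x hx => by
          simp only [Finset.mem_filter] at hx
          have := hS hx.1
          simp only [Finset.mem_Icc] at this ⊢
          omega
      _ = m - c := by rw [Nat.card_Icc]; omega
  have := Finset.card_filter_add_card_filter_not (s := S) (p := (· ≤ c))
  unfold numLE
  omega

theorem fle_Icc_one {S : Finset ℕ} {k : ℕ} (hS : 0 ∉ S) (hk : S.card = k) :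
    FLE (Finset.Icc 1 k) S := by
  refine fle_iff_numLE.2 ⟨by simp [hk], fun c => ?_⟩
  have hSc : numLE S c ≤ c :=
    calc numLE S c ≤ #(Finset.Icc 1 c) := Finset.card_le_card fun x hx => by
          simp only [Finset.mem_filter] at hx
          simp only [Finset.mem_Icc]
          exact ⟨Nat.pos_of_ne_zero fun h => hS (h ▸ hx.1), hx.2⟩
      _ = c := by simp
  have hIcc : numLE (Finset.Icc 1 k) c = min k c := by
    rw [numLE, show {x ∈ Finset.Icc 1 k | x ≤ c} = Finset.Icc 1 (min k c) by ext; simp; omega]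
    simp
  have := numLE_le_card S c
  omega

theorem fle_Icc_top {S : Finset ℕ} {k m : ℕ} (hS : S ⊆ Finset.Icc 1 m) (hk : S.card = k)
    (hkm : k ≤ m) : FLE S (Finset.Icc (m - k + 1) m) := by
  refine fle_iff_numLE.2 ⟨by simp; omega, fun c => ?_⟩
  have htop : numLE (Finset.Icc (m - k + 1) m) c ≤ min c m + 1 - (m - k + 1) :=
    calc _ ≤ #(Finset.Icc (m - k + 1) (min c m)) := Finset.card_le_card fun x hx => by
          simp only [Finset.mem_filter, Finset.mem_Icc] at hx ⊢
          omega
      _ = _ := Nat.card_Icc _ _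
  have := card_sub_le_numLE hS c
  omega

theorem FLE.le_of_mem_Icc_top {S : Finset ℕ} {k m : ℕ} (h : FLE S (Finset.Icc (m - k + 1) m))
    (hkm : k ≤ m) {x : ℕ} (hx : x ∈ S) : x ≤ m := by
  have hQ : numLE (Finset.Icc (m - k + 1) m) m = k := by
    rw [numLE, Finset.filter_true_of_mem fun x hx => (Finset.mem_Icc.1 hx).2]
    simp
    omega
  have hS : {x ∈ S | x ≤ m} = S := Finset.eq_of_subset_of_card_le (Finset.filter_subset _ _) <| by
    have hle := (fle_iff_numLE.1 h).2 m
    have hcard := h.1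
    simp only [Nat.card_Icc] at hcard
    unfold numLE at hle hQ
    omega
  rw [← hS] at hx
  exact (Finset.mem_filter.1 hx).2

end SubsetOrder

section Completion

variable {k m : ℕ} {S : Finset ℕ}

theorem subset_completion : S ⊆ completion k m S := Finset.subset_union_left

theorem mem_sdiff_of_mem_completion_extra {x : ℕ}
    (hx : x ∈ (((Finset.Icc 1 m) \ S).sort (· ≤ ·)).reverse.take (k - S.card)) :
    x ∈ Finset.Icc 1 m \ S :=
  (Finset.mem_sort _).1 (List.mem_reverse.1 ((List.take_sublist _ _).mem hx))

theorem completion_subset_Icc (hS : S ⊆ Finset.Icc 1 m) : completion k m S ⊆ Finset.Icc 1 m :=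
  Finset.union_subset hS fun _ hx =>
    (Finset.mem_sdiff.1 (mem_sdiff_of_mem_completion_extra (List.mem_toFinset.1 hx))).1

theorem card_completion (hS : S ⊆ Finset.Icc 1 m) (hk : S.card ≤ k) (hkm : k ≤ m) :
    (completion k m S).card = k := by
  set extra := (((Finset.Icc 1 m) \ S).sort (· ≤ ·)).reverse.take (k - S.card)
  have hnodup : extra.Nodup :=
    (List.take_sublist _ _).nodup (List.nodup_reverse.2 (Finset.sort_nodup _ _))
  have hdisj : Disjoint S extra.toFinset := Finset.disjoint_left.2 fun x hxS hx =>
    (Finset.mem_sdiff.1 (mem_sdiff_of_mem_completion_extra (List.mem_toFinset.1 hx))).2 hxS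
  have hcard : extra.toFinset.card = k - S.card := by
    rw [List.toFinset_card_of_nodup hnodup, List.length_take, List.length_reverse,
      Finset.length_sort, Finset.card_sdiff_of_subset hS, Nat.card_Icc]
    omega
  rw [completion, Finset.card_union_of_disjoint hdisj, hcard]
  omega

/-- Once an added element is `≤ c`, all larger elements of `{1,…,m} \ S` were added too. -/
theorem Icc_subset_completion {c y : ℕ}
    (hy : y ∈ (((Finset.Icc 1 m) \ S).sort (· ≤ ·)).reverse.take (k - S.card)) (hyc : y ≤ c) :
    Finset.Icc (c + 1) m ⊆ completion k m S := by
  intro x hx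
  by_cases hxS : x ∈ S
  · exact subset_completion hxS
  have hxmem : x ∈ (((Finset.Icc 1 m) \ S).sort (· ≤ ·)).reverse := by
    simp only [List.mem_reverse, Finset.mem_sort, Finset.mem_sdiff, Finset.mem_Icc] at hx ⊢
    exact ⟨⟨by omega, hx.2⟩, hxS⟩
  have hsorted : ((((Finset.Icc 1 m) \ S).sort (· ≤ ·)).reverse).Pairwise (· > ·) :=
    List.pairwise_reverse.2 (Finset.sortedLT_sort _).pairwise
  refine Finset.mem_union_right _ (List.mem_toFinset.2 (hsorted.mem_take_of_lt hy hxmem ?_))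
  simp only [Finset.mem_Icc] at hx
  omega

theorem numLE_completion_le (hS : S ⊆ Finset.Icc 1 m) (hk : S.card ≤ k) (hkm : k ≤ m) (c : ℕ) :
    numLE (completion k m S) c ≤ max (numLE S c) (k - (m - c)) := by
  by_cases hextra : ∃ y ∈ (((Finset.Icc 1 m) \ S).sort (· ≤ ·)).reverse.take (k - S.card), y ≤ c
  · obtain ⟨y, hy, hyc⟩ := hextra
    have habove : m - c ≤ #{x ∈ completion k m S | ¬x ≤ c} :=
      calc m - c = #(Finset.Icc (c + 1) m) := by rw [Nat.card_Icc]; omega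
        _ ≤ _ := Finset.card_le_card fun x hx => Finset.mem_filter.2
          ⟨Icc_subset_completion hy hyc hx, by simp only [Finset.mem_Icc] at hx; omega⟩
    have := Finset.card_filter_add_card_filter_not (s := completion k m S) (p := (· ≤ c))
    rw [card_completion hS hk hkm] at this
    unfold numLE
    omega
  · push Not at hextra
    refine le_max_of_le_left (Finset.card_le_card fun x hx => ?_)
    simp only [completion, Finset.mem_filter, Finset.mem_union, List.mem_toFinset] at hx ⊢
    exact ⟨hx.1.resolve_right fun h => (hextra x h).not_ge hx.2, hx.2⟩

theorem fle_completion {A B : Finset ℕ} (hA : A ⊆ Finset.Icc 1 m) (hB : B ⊆ Finset.Icc 1 m)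
    (hAk : A.card ≤ k) (hBk : B.card ≤ k) (hkm : k ≤ m) (h : ∀ c, numLE B c ≤ numLE A c) :
    FLE (completion k m A) (completion k m B) := by
  refine fle_iff_numLE.2 ⟨by rw [card_completion hA hAk hkm, card_completion hB hBk hkm],
    fun c => (numLE_completion_le hB hBk hkm c).trans (max_le ?_ ?_)⟩
  · exact (h c).trans (numLE_mono subset_completion c)
  · simpa [card_completion hA hAk hkm] using
      card_sub_le_numLE (completion_subset_Icc (k := k) hA) c

end Completion

section Readability

theorem readable_iff_exists_forall₂ {n : ℕ} {w : List ℕ} {P Q : Finset ℕ} :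
    Readable n w P Q ↔ ∃ L : List (Finset ℕ), List.Forall₂ (· ∈ ·) w L ∧
      (∀ A ∈ L, A ⊆ Finset.Icc 1 n) ∧ (P :: (L ++ [Q])).Pairwise FLE := by
  constructor
  · rintro ⟨L, hlen, hsub, hchain, hmem⟩
    refine ⟨L, List.forall₂_iff_get.2 ⟨hlen.symm, fun i h₁ h₂ => ?_⟩, hsub,
      List.isChain_iff_pairwise.1 hchain⟩
    simpa [List.getElem?_eq_getElem h₂] using hmem i h₁
  · rintro ⟨L, hwL, hsub, hpair⟩
    refine ⟨L, hwL.length_eq.symm, hsub, List.isChain_iff_pairwise.2 hpair, fun i hi => ?_⟩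
    rw [List.getD_eq_getElem _ _ (hwL.length_eq ▸ hi)]
    exact List.forall₂_iff_get.1 hwL |>.2 i hi _

theorem length_le_numLE_of_forall₂ {x : ℕ} {w : List ℕ} {S : Finset ℕ} {L : List (Finset ℕ)}
    (hw : (x :: w).Pairwise (· > ·)) (hL : (S :: L).Pairwise FLE)
    (hwL : List.Forall₂ (· ∈ ·) (x :: w) (S :: L)) : (x :: w).length ≤ numLE S x := by
  induction w generalizing x S L with
  | nil =>
    exact Finset.card_pos.2 ⟨x, Finset.mem_filter.2 ⟨(List.forall₂_cons.1 hwL).1, le_rfl⟩⟩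
  | cons x' w ih =>
    obtain ⟨hxS, hwL'⟩ := List.forall₂_cons.1 hwL
    cases L with
    | nil => cases hwL'
    | cons S' L =>
      have hx'x : x' < x := List.rel_of_pairwise_cons hw List.mem_cons_self
      have hsub : {y ∈ S | y ≤ x'} ⊆ {y ∈ S | y ≤ x} := fun y hy => by
        simp only [Finset.mem_filter] at hy ⊢
        exact ⟨hy.1, hy.2.trans hx'x.le⟩
      have hstep : numLE S x' < numLE S x := Finset.card_lt_card <|
        (Finset.ssubset_iff_of_subset hsub).2
          ⟨x, Finset.mem_filter.2 ⟨hxS, le_rfl⟩, fun h => (Finset.mem_filter.1 h).2.not_gt hx'x⟩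
      calc (x :: x' :: w).length = (x' :: w).length + 1 := rfl
        _ ≤ numLE S' x' + 1 := Nat.add_le_add_right (ih hw.of_cons hL.of_cons hwL') 1
        _ ≤ numLE S x' + 1 :=
          Nat.add_le_add_right ((fle_iff_numLE.1 (List.rel_of_pairwise_cons hL
            List.mem_cons_self)).2 x') 1
        _ ≤ numLE S x := hstep

theorem length_le_min_of_sublist {k m : ℕ} {c u : List ℕ} {L : List (Finset ℕ)}
    (hc : c.Pairwise (· > ·)) (hu : u.Sublist c) (hum : ∀ x ∈ u, x ≤ m)
    (huL : List.Forall₂ (· ∈ ·) u L) (hL : L.Pairwise FLE) (hcard : ∀ A ∈ L, A.card = k) :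
    u.length ≤ min k (c.countP (· ≤ m)) := by
  refine le_min ?_ ?_
  · cases huL with
    | nil => exact Nat.zero_le _
    | @cons x S w L hxS hwL =>
      exact (length_le_numLE_of_forall₂ (hc.sublist hu) hL (.cons hxS hwL)).trans
        ((numLE_le_card S x).trans_eq (hcard S List.mem_cons_self))
  · calc u.length = u.countP (· ≤ m) := (List.countP_eq_length.2 (by simpa using hum)).symm
      _ ≤ c.countP (· ≤ m) := hu.countP_le

theorem length_le_sum_min_of_sublist_flatten {k m : ℕ} {cs : List (List ℕ)}
    (hcs : ∀ c ∈ cs, c.Pairwise (· > ·)) {u : List ℕ} (hu : u.Sublist cs.flatten)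
    (hum : ∀ x ∈ u, x ≤ m) {L : List (Finset ℕ)} (huL : List.Forall₂ (· ∈ ·) u L)
    (hL : L.Pairwise FLE) (hcard : ∀ A ∈ L, A.card = k) :
    u.length ≤ (cs.map fun c => min k (c.countP (· ≤ m))).sum := by
  induction cs generalizing u L with
  | nil => simp_all
  | cons c cs ih =>
    obtain ⟨u₁, u₂, rfl, hu₁, hu₂⟩ := List.sublist_append_iff.1 hu
    have huL₁ := List.forall₂_take u₁.length huL
    have huL₂ := List.forall₂_drop u₁.length huL
    rw [List.take_left] at huL₁
    rw [List.drop_left] at huL₂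
    rw [← List.take_append_drop u₁.length L, List.pairwise_append] at hL
    rw [List.length_append, List.map_cons, List.sum_cons]
    exact Nat.add_le_add
      (length_le_min_of_sublist (hcs c List.mem_cons_self) hu₁
        (fun x hx => hum x (List.mem_append_left _ hx)) huL₁ hL.1
        fun A hA => hcard A (List.mem_of_mem_take hA))
      (ih (fun c hc => hcs c (List.mem_cons_of_mem _ hc)) hu₂
        (fun x hx => hum x (List.mem_append_right _ hx)) huL₂ hL.2.1
        fun A hA => hcard A (List.mem_of_mem_drop hA))

theorem readable_flatten_of_pairwise {ι : Type*} {n : ℕ} {P Q : Finset ℕ} {l : List ι}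
    {w : ι → List ℕ} {C : ι → Finset ℕ} (hw : ∀ j ∈ l, ∀ x ∈ w j, x ∈ C j)
    (hC : ∀ j ∈ l, C j ⊆ Finset.Icc 1 n) (hmono : l.Pairwise fun i j => FLE (C i) (C j))
    (hP : ∀ j ∈ l, FLE P (C j)) (hQ : ∀ j ∈ l, FLE (C j) Q) (hPQ : FLE P Q) :
    Readable n (l.map w).flatten P Q := by
  set L := (l.map fun j => List.replicate (w j).length (C j)).flatten
  have hmemL : ∀ A ∈ L, ∃ j ∈ l, A = C j := by
    intro A hA
    obtain ⟨_, hblock, hA⟩ := List.mem_flatten.1 hA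
    obtain ⟨j, hj, rfl⟩ := List.mem_map.1 hblock
    exact ⟨j, hj, List.eq_of_mem_replicate hA⟩
  have hwL : List.Forall₂ (· ∈ ·) (l.map w).flatten L := by
    refine List.rel_flatten ?_
    rw [List.forall₂_map_left_iff, List.forall₂_map_right_iff, List.forall₂_same]
    exact fun j hj => List.forall₂_replicate_length (hw j hj)
  have hL : L.Pairwise FLE := by
    refine List.pairwise_flatten.2 ⟨fun _ hblock => ?_, ?_⟩
    · obtain ⟨j, -, rfl⟩ := List.mem_map.1 hblock
      exact List.pairwise_replicate.2 (.inr (FLE.refl _))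
    · refine List.pairwise_map.2 (hmono.imp fun h A hA B hB => ?_)
      rw [List.eq_of_mem_replicate hA, List.eq_of_mem_replicate hB]
      exact h
  refine readable_iff_exists_forall₂.2 ⟨L, hwL, fun A hA => ?_, ?_⟩
  · obtain ⟨j, hj, rfl⟩ := hmemL A hA
    exact hC j hj
  refine List.pairwise_cons.2 ⟨fun A hA => ?_, List.pairwise_append.2
    ⟨hL, List.pairwise_singleton _ _, fun A hA B hB => ?_⟩⟩
  · rcases List.mem_append.1 hA with hA | hA
    · obtain ⟨j, hj, rfl⟩ := hmemL A hA
      exact hP j hj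
    · rwa [List.mem_singleton.1 hA]
  · obtain ⟨j, hj, rfl⟩ := hmemL A hA
    rw [List.mem_singleton.1 hB]
    exact hQ j hj

end Readability

namespace Tableau

variable {n : ℕ} (T : Tableau n)

def row (i : ℕ) : List ℕ := T.rows.getD i []

def entry (i j : ℕ) : ℕ := (T.row i).getD j 0

def colHeight (j : ℕ) : ℕ := (List.range T.rows.length).countP fun i => j < (T.row i).length

theorem length_row_le_of_le {i i' : ℕ} (h : i ≤ i') : (T.row i').length ≤ (T.row i).length := by
  induction h with
  | refl => exact le_rfl
  | step _ ih => exact (T.shape _).trans ih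

theorem lt_colHeight_iff {i j : ℕ} :
    i < T.colHeight j ↔ i < T.rows.length ∧ j < (T.row i).length :=
  List.lt_countP_range_iff fun _ _ hii' _ h => h.trans_le (T.length_row_le_of_le hii')

theorem colHeight_le (j : ℕ) : T.colHeight j ≤ T.rows.length :=
  le_of_forall_lt fun _ hi => (T.lt_colHeight_iff.1 hi).1

theorem row_mem_rows {i : ℕ} (hi : i < T.rows.length) : T.row i ∈ T.rows := by
  rw [row, List.getD_eq_getElem _ _ hi]
  exact List.getElem_mem _

theorem entry_mem_Icc {i j : ℕ} (h : i < T.colHeight j) : T.entry i j ∈ Finset.Icc 1 n := by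
  obtain ⟨hi, hj⟩ := T.lt_colHeight_iff.1 h
  rw [entry, List.getD_eq_getElem _ _ hj]
  exact T.entries_mem _ (T.row_mem_rows hi) _ (List.getElem_mem _)

theorem entry_le_entry_right {i j j' : ℕ} (hjj' : j ≤ j') (hj' : j' < (T.row i).length) :
    T.entry i j ≤ T.entry i j' := by
  have hsorted : (T.row i).Pairwise (· ≤ ·) := by
    rcases Nat.lt_or_ge i T.rows.length with hi | hi
    · exact T.row_weak _ (T.row_mem_rows hi)
    · rw [row, List.getD_eq_default _ _ hi]; exact .nil
  rw [entry, entry, List.getD_eq_getElem _ _ hj', List.getD_eq_getElem _ _ (by omega)]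
  exact hsorted.rel_get_of_le (a := ⟨j, by omega⟩) (b := ⟨j', hj'⟩) hjj'

theorem entry_lt_entry_up {i i' j : ℕ} (hii' : i < i') (hi' : i' < T.colHeight j) :
    T.entry i j < T.entry i' j := by
  induction hii' with
  | refl => exact T.col_strict i j (T.lt_colHeight_iff.1 hi').2
  | @step i' _ ih =>
    exact (ih (by omega)).trans (T.col_strict i' j (T.lt_colHeight_iff.1 hi').2)

theorem entry_le_entry_up {i i' j : ℕ} (hii' : i ≤ i') (hi' : i' < T.colHeight j) :
    T.entry i j ≤ T.entry i' j :=
  hii'.eq_or_lt.elim (fun h => h ▸ le_rfl) fun h => (T.entry_lt_entry_up h hi').le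

theorem colOf_eq (j : ℕ) :
    colOf T j = ((List.range (T.colHeight j)).map (T.entry · j)).reverse := by
  have hentry : ∀ i, (T.rows.getD i [])[j]? =
      if i < T.colHeight j then some (T.entry i j) else none := by
    intro i
    split_ifs with hi
    · have hj := (T.lt_colHeight_iff.1 hi).2
      rw [entry, List.getD_eq_getElem _ _ hj]
      exact List.getElem?_eq_getElem hj
    · refine List.getElem?_eq_none (not_lt.1 fun hj => hi (T.lt_colHeight_iff.2 ⟨?_, hj⟩))
      by_contra! hR
      rw [List.getD_eq_default _ _ hR] at hj
      simp at hj
  have hlow : (List.range (T.colHeight j)).filterMap (fun i => (T.rows.getD i [])[j]?) =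
      (List.range (T.colHeight j)).map (T.entry · j) := by
    rw [← List.filterMap_eq_map]
    exact List.filterMap_congr fun i hi => (hentry i).trans (if_pos (List.mem_range.1 hi))
  have hhigh : ((List.range (T.rows.length - T.colHeight j)).map (T.colHeight j + ·)).filterMap
      (fun i => (T.rows.getD i [])[j]?) = [] :=
    List.filterMap_eq_nil_iff.2 fun i hi => by
      obtain ⟨i, -, rfl⟩ := List.mem_map.1 hi
      rw [hentry, if_neg (by omega)]
  rw [colOf, List.filterMap_reverse, ← Nat.add_sub_cancel' (T.colHeight_le j), List.range_add,
    List.filterMap_append, hlow, hhigh, List.append_nil]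

theorem colOf_pairwise_gt (j : ℕ) : (colOf T j).Pairwise (· > ·) := by
  rw [colOf_eq, List.pairwise_reverse, List.pairwise_map]
  exact List.pairwise_lt_range.imp_of_mem fun _ hi' hii' =>
    T.entry_lt_entry_up hii' (List.mem_range.1 hi')

def colCountLE (m j : ℕ) : ℕ := (colOf T j).countP (· ≤ m)

theorem colCountLE_eq (m j : ℕ) :
    T.colCountLE m j = (List.range (T.colHeight j)).countP fun i => T.entry i j ≤ m := by
  rw [colCountLE, colOf_eq, List.countP_reverse, List.countP_map]
  rfl

theorem lt_colCountLE_iff {m i j : ℕ} :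
    i < T.colCountLE m j ↔ i < T.colHeight j ∧ T.entry i j ≤ m := by
  rw [colCountLE_eq]
  exact List.lt_countP_range_iff fun _ _ hii' hi' h => (T.entry_le_entry_up hii' hi').trans h

theorem countP_row_eq_card (m i : ℕ) : (T.row i).countP (· ≤ m) =
    #{j ∈ Finset.range (T.row 0).length | j < (T.row i).length ∧ T.entry i j ≤ m} := by
  have hlen := T.length_row_le_of_le (Nat.zero_le i)
  calc (T.row i).countP (· ≤ m)
        = (List.range (T.row i).length).countP fun j => T.entry i j ≤ m := by
          conv_lhs => rw [← List.map_getD_range (T.row i) 0]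
          rw [List.countP_map]
          rfl
    _ = _ := by
          rw [List.countP_range]
          congr 1
          ext j
          simp only [Finset.mem_filter, Finset.mem_range]
          omega

theorem min_colCountLE_eq_card (k m j : ℕ) : min k (T.colCountLE m j) =
    #{i ∈ Finset.range (min k T.rows.length) | j < (T.row i).length ∧ T.entry i j ≤ m} := by
  rw [← Finset.card_range (min k _)]
  congr 1
  ext i
  have := @lt_colCountLE_iff _ T m i j
  have := @lt_colHeight_iff _ T i j
  simp only [Finset.mem_filter, Finset.mem_range]
  omega

/-- Both sides count the cells `(i, j)` with `i < k` holding an entry `≤ m`. -/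
theorem countP_flatten_take_rows (k m : ℕ) :
    (T.rows.take k).flatten.countP (· ≤ m) =
      ((List.range (T.row 0).length).map fun j => min k (T.colCountLE m j)).sum := by
  have htake : T.rows.take k = (List.range (min k T.rows.length)).map T.row := by
    refine List.ext_getElem (by simp) fun i h₁ _ => ?_
    simp only [List.getElem_take, List.getElem_map, List.getElem_range, row]
    rw [List.getD_eq_getElem]
  rw [htake, List.countP_flatten, List.map_map, List.sum_map_range, List.sum_map_range]
  simp only [Function.comp_apply, countP_row_eq_card, min_colCountLE_eq_card]
  exact Finset.sum_card_bipartiteAbove_eq_sum_card_bipartiteBelow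
    fun i j => j < (T.row i).length ∧ T.entry i j ≤ m

end Tableau

namespace Tableau

variable {n : ℕ} (T : Tableau n)

theorem colCountLE_le_colHeight (m j : ℕ) : T.colCountLE m j ≤ T.colHeight j :=
  le_of_forall_lt fun _ hi => (T.lt_colCountLE_iff.1 hi).1

def lowEntries (k m j : ℕ) : List ℕ :=
  ((List.range (min k (T.colCountLE m j))).map (T.entry · j)).reverse

def lowSet (k m j : ℕ) : Finset ℕ :=
  (Finset.range (min k (T.colCountLE m j))).image (T.entry · j)

theorem lowEntries_sublist_colOf (k m j : ℕ) : (T.lowEntries k m j).Sublist (colOf T j) := by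
  rw [colOf_eq]
  exact ((List.range_sublist.2 ((min_le_right _ _).trans (T.colCountLE_le_colHeight m j))).map
    _).reverse

theorem mem_lowSet_of_mem_lowEntries {k m j x : ℕ} (hx : x ∈ T.lowEntries k m j) :
    x ∈ T.lowSet k m j := by
  simpa [lowEntries, lowSet] using hx

theorem injOn_entry_lowSet (k m j : ℕ) :
    Set.InjOn (T.entry · j) (Finset.range (min k (T.colCountLE m j))) := by
  have hH : ∀ i ∈ (Finset.range (min k (T.colCountLE m j)) : Set ℕ), i < T.colHeight j :=
    fun i hi => (T.lt_colCountLE_iff.1 (lt_min_iff.1 (Finset.mem_range.1 hi)).2).1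
  intro i hi i' hi' h
  by_contra hne
  rcases Nat.lt_or_gt_of_ne hne with hlt | hlt
  · exact (T.entry_lt_entry_up hlt (hH i' hi')).ne h
  · exact (T.entry_lt_entry_up hlt (hH i hi)).ne' h

theorem card_lowSet (k m j : ℕ) : (T.lowSet k m j).card = min k (T.colCountLE m j) := by
  rw [lowSet, Finset.card_image_of_injOn (T.injOn_entry_lowSet k m j), Finset.card_range]

theorem lowSet_subset_Icc (k m j : ℕ) : T.lowSet k m j ⊆ Finset.Icc 1 m := by
  intro x hx
  obtain ⟨i, hi, rfl⟩ := Finset.mem_image.1 hx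
  obtain ⟨hH, hm⟩ := T.lt_colCountLE_iff.1 (lt_min_iff.1 (Finset.mem_range.1 hi)).2
  exact Finset.mem_Icc.2 ⟨(Finset.mem_Icc.1 (T.entry_mem_Icc hH)).1, hm⟩

theorem numLE_lowSet_antitone {k m j j' : ℕ} (hjj' : j ≤ j') (c : ℕ) :
    numLE (T.lowSet k m j') c ≤ numLE (T.lowSet k m j) c := by
  simp only [numLE, lowSet, Finset.filter_image]
  rw [Finset.card_image_of_injOn ((T.injOn_entry_lowSet k m j').mono (Finset.filter_subset _ _)),
    Finset.card_image_of_injOn ((T.injOn_entry_lowSet k m j).mono (Finset.filter_subset _ _))]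
  refine Finset.card_le_card fun i hi => ?_
  simp only [Finset.mem_filter, Finset.mem_range, lt_min_iff, T.lt_colCountLE_iff] at hi ⊢
  obtain ⟨⟨hk, hH', hm'⟩, hc⟩ := hi
  have hright : T.entry i j ≤ T.entry i j' :=
    T.entry_le_entry_right hjj' (T.lt_colHeight_iff.1 hH').2
  have hH : i < T.colHeight j := T.lt_colHeight_iff.2
    ⟨(T.lt_colHeight_iff.1 hH').1, lt_of_le_of_lt hjj' (T.lt_colHeight_iff.1 hH').2⟩
  exact ⟨⟨hk, hH, hright.trans hm'⟩, hright.trans hc⟩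

theorem fle_completion_lowSet {k m j j' : ℕ} (hkm : k ≤ m) (hjj' : j ≤ j') :
    FLE (completion k m (T.lowSet k m j)) (completion k m (T.lowSet k m j')) :=
  fle_completion (T.lowSet_subset_Icc k m j) (T.lowSet_subset_Icc k m j')
    ((T.card_lowSet k m j).trans_le (min_le_left _ _))
    ((T.card_lowSet k m j').trans_le (min_le_left _ _)) hkm (T.numLE_lowSet_antitone hjj')

theorem flatten_lowEntries_sublist (k m : ℕ) :
    ((List.range (T.row 0).length).map (T.lowEntries k m)).flatten.Sublist (colReading T) :=
  List.flatten_map_sublist_flatten_map fun j _ => T.lowEntries_sublist_colOf k m j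

theorem length_flatten_lowEntries (k m : ℕ) :
    ((List.range (T.row 0).length).map (T.lowEntries k m)).flatten.length =
      ((List.range (T.row 0).length).map fun j => min k (T.colCountLE m j)).sum := by
  simp [lowEntries, List.length_flatten, Function.comp_def]

theorem readable_flatten_lowEntries {k m : ℕ} (hkm : k ≤ m) (hm : m ≤ n) :
    Readable n ((List.range (T.row 0).length).map (T.lowEntries k m)).flatten
      (Finset.Icc 1 k) (Finset.Icc (m - k + 1) m) := by
  have hsub : ∀ j, completion k m (T.lowSet k m j) ⊆ Finset.Icc 1 m := fun j =>
    completion_subset_Icc (T.lowSet_subset_Icc k m j)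
  have hcard : ∀ j, (completion k m (T.lowSet k m j)).card = k := fun j =>
    card_completion (T.lowSet_subset_Icc k m j) ((T.card_lowSet k m j).trans_le (min_le_left _ _))
      hkm
  have hzero : ∀ {S : Finset ℕ}, S ⊆ Finset.Icc 1 m → 0 ∉ S := fun hS h0 => by
    simpa using hS h0
  refine readable_flatten_of_pairwise (C := fun j => completion k m (T.lowSet k m j))
    (fun j _ x hx => subset_completion (T.mem_lowSet_of_mem_lowEntries hx))
    (fun j _ => (hsub j).trans (Finset.Icc_subset_Icc le_rfl hm))
    (List.pairwise_lt_range.imp fun h => T.fle_completion_lowSet hkm h.le)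
    (fun j _ => fle_Icc_one (hzero (hsub j)) (hcard j))
    (fun j _ => fle_Icc_top (hsub j) (hcard j) hkm)
    (fle_Icc_one (hzero (Finset.Icc_subset_Icc (by omega) le_rfl)) (by simp; omega))

theorem length_le_of_readable {k m : ℕ} (hkm : k ≤ m) {u : List ℕ} (hu : u.Sublist (colReading T))
    (hread : Readable n u (Finset.Icc 1 k) (Finset.Icc (m - k + 1) m)) :
    u.length ≤ ((List.range (T.row 0).length).map fun j => min k (T.colCountLE m j)).sum := by
  obtain ⟨L, huL, -, hpair⟩ := readable_iff_exists_forall₂.1 hread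
  obtain ⟨hL, -, hLQ⟩ := List.pairwise_append.1 (List.pairwise_cons.1 hpair).2
  have hQ : ∀ A ∈ L, FLE A (Finset.Icc (m - k + 1) m) := fun A hA => hLQ A hA _ List.mem_cons_self
  have hum : ∀ x ∈ u, x ≤ m := fun x hx => by
    obtain ⟨A, hA, hxA⟩ := huL.exists_mem_of_mem_left hx
    exact (hQ A hA).le_of_mem_Icc_top hkm hxA
  have hcard : ∀ A ∈ L, A.card = k := fun A hA => by
    rw [(hQ A hA).1, Nat.card_Icc]
    omega
  have hbound := length_le_sum_min_of_sublist_flatten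
    (cs := (List.range (T.row 0).length).map (colOf T))
    (by simpa using fun j _ => T.colOf_pairwise_gt j) hu hum huL hL hcard
  simpa [Function.comp_def, colCountLE] using hbound

end Tableau

theorem stmt10_general (n : ℕ) (T : Tableau n) (k m : ℕ) (hkm : k ≤ m)
    (hm : m ≤ n) :
    (∃ u : List ℕ, u.Sublist (colReading T) ∧
        Readable n u (Finset.Icc 1 k) (Finset.Icc (m - k + 1) m) ∧
        u.length = ((T.rows.take k).flatten.countP fun x => decide (x ≤ m))) ∧
    (∀ u : List ℕ, u.Sublist (colReading T) →
        Readable n u (Finset.Icc 1 k) (Finset.Icc (m - k + 1) m) →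
        u.length ≤ ((T.rows.take k).flatten.countP fun x => decide (x ≤ m))) := by
  rw [T.countP_flatten_take_rows k m]
  exact ⟨⟨_, T.flatten_lowEntries_sublist k m, T.readable_flatten_lowEntries hkm hm,
    T.length_flatten_lowEntries k m⟩, fun _ hu hread => T.length_le_of_readable hkm hu hread⟩

/-- for a semistandard Young tableau `T` over `{1,…,n}` and `k ≤ m ≤ n`,
the maximum length of a scattered subword of the column reading of `T` readable from
`{1,…,k}` to `{m-k+1,…,m}` equals the number of entries from `{1,…,m}` in the bottom
`k` rows of `T`. -/
theorem stmt10 (n : ℕ) (T : Tableau n) (k m : ℕ) (hk : 1 ≤ k) (hkm : k ≤ m)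
    (hm : m ≤ n) :
    (∃ u : List ℕ, u.Sublist (colReading T) ∧
        Readable n u (Finset.Icc 1 k) (Finset.Icc (m - k + 1) m) ∧
        u.length = ((T.rows.take k).flatten.countP fun x => decide (x ≤ m))) ∧
    (∀ u : List ℕ, u.Sublist (colReading T) →
        Readable n u (Finset.Icc 1 k) (Finset.Icc (m - k + 1) m) →
        u.length ≤ ((T.rows.take k).flatten.countP fun x => decide (x ≤ m))) :=
  stmt10_general n T k m hkm hm
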